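/- arXiv:1211.2713 — 3 statements merged into one kernel-verified Lean document; each statement's English description precedes it below -/
import Mathlib

section
/- Let κ ≥ 1, let B₁ be a real m₁ × d matrix and B₂ a real m₂ × d matrix such that (1/κ)·B₁ᵀB₁ ⪯ B₂ᵀB₂ ⪯ B₁ᵀB₁ in the Loewner order, and let P₁ and P₂ be Moore–Penrose pseudoinverses of B₁ᵀB₁ and B₂ᵀB₂ respectively. Then for every row vector x ∈ ℝᵈ, x P₁ xᵀ ≤ x P₂ xᵀ ≤ κ · x P₁ xᵀ. -/
open Matrix BigOperators

def IsMoorePenrose {d : ℕ} (M P : Matrix (Fin d) (Fin d) ℝ) : Prop :=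
  M * P * M = M ∧ P * M * P = P ∧ (M * P)ᵀ = M * P ∧ (P * M)ᵀ = P * M

/-!
Write `Mᵢ = BᵢᵀBᵢ`. Both hypotheses force `M₁` and `M₂` to have the same kernel. For positive
semidefinite `A ⪯ B` with `ker A ⊆ ker B` the pseudoinverses reverse the order, `B⁺ ⪯ A⁺`: the
kernel condition gives `B⁺ A A⁺ = B⁺`, and then
`A⁺ - B⁺ = (A⁺ - B⁺) A (A⁺ - B⁺) + B⁺ (B - A) B⁺`.
Applied to `M₂ ⪯ M₁` and to `κ⁻¹ M₁ ⪯ M₂`, whose pseudoinverse is `κ M₁⁺`, this gives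
`M₁⁺ ⪯ M₂⁺ ⪯ κ M₁⁺`.
-/

open scoped MatrixOrder

namespace Matrix

lemma mul_eq_self_of_ker_le {R m n k : Type*} [Ring R] [Fintype n]
    {A : Matrix m n R} {B : Matrix k n R} {E : Matrix n n R}
    (hker : ∀ v, A *ᵥ v = 0 → B *ᵥ v = 0) (hAE : A * E = A) : B * E = B := by
  refine ext_iff_mulVec.2 fun v => ?_
  have h : A *ᵥ (v - E *ᵥ v) = 0 := by rw [mulVec_sub, mulVec_mulVec, hAE, sub_self]
  simpa only [mulVec_sub, mulVec_mulVec, sub_eq_zero, eq_comm] using hker _ h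

open scoped ComplexOrder in
lemma mulVec_eq_zero_of_le {𝕜 n : Type*} [RCLike 𝕜] [Fintype n] {A B : Matrix n n 𝕜}
    (hA : A.PosSemidef) (hAB : A ≤ B) {v : n → 𝕜} (hv : B *ᵥ v = 0) : A *ᵥ v = 0 := by
  refine (hA.dotProduct_mulVec_zero_iff v).1 (le_antisymm ?_ (hA.dotProduct_mulVec_nonneg v))
  have h := (le_iff.1 hAB).dotProduct_mulVec_nonneg v
  rwa [sub_mulVec, hv, dotProduct_sub, dotProduct_zero, zero_sub, neg_nonneg] at h

end Matrix

namespace IsMoorePenrose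

variable {d : ℕ} {M P Q : Matrix (Fin d) (Fin d) ℝ}

theorem unique (hP : IsMoorePenrose M P) (hQ : IsMoorePenrose M Q) : P = Q := by
  obtain ⟨hP1, hP2, hP3, hP4⟩ := hP
  obtain ⟨hQ1, hQ2, hQ3, hQ4⟩ := hQ
  have hMP : M * P = M * Q :=
    calc M * P = (M * Q * M * P)ᵀ := by rw [hQ1, hP3]
      _ = (M * P) * (M * Q) := by rw [mul_assoc (M * Q), transpose_mul, hP3, hQ3]
      _ = M * Q := by rw [← mul_assoc, hP1]
  have hPM : P * M = Q * M :=
    calc P * M = (P * (M * Q * M))ᵀ := by rw [hQ1, hP4]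
      _ = ((P * M) * (Q * M))ᵀ := by simp only [mul_assoc]
      _ = (Q * M) * (P * M) := by rw [transpose_mul, hP4, hQ4]
      _ = Q * M := by rw [mul_assoc, ← mul_assoc M, hP1]
  calc P = P * M * P := hP2.symm
    _ = Q * M * Q := by rw [hPM, mul_assoc, hMP, ← mul_assoc]
    _ = Q := hQ2

theorem transpose (hP : IsMoorePenrose M P) : IsMoorePenrose Mᵀ Pᵀ := by
  obtain ⟨h1, h2, h3, h4⟩ := hP
  refine ⟨?_, ?_, ?_, ?_⟩
  · simpa only [transpose_mul, mul_assoc] using congrArg Matrix.transpose h1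
  · simpa only [transpose_mul, mul_assoc] using congrArg Matrix.transpose h2
  · simpa only [transpose_mul, transpose_transpose] using h4.symm
  · simpa only [transpose_mul, transpose_transpose] using h3.symm

theorem smul (hP : IsMoorePenrose M P) {c : ℝ} (hc : c ≠ 0) :
    IsMoorePenrose (c • M) (c⁻¹ • P) := by
  obtain ⟨h1, h2, h3, h4⟩ := hP
  refine ⟨?_, ?_, ?_, ?_⟩ <;> simp [smul_smul, *]

variable (hM : M.IsSymm) (hP : IsMoorePenrose M P)
include hM hP

theorem isSymm : P.IsSymm :=
  (hM.eq ▸ hP.transpose).unique hP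

theorem mul_comm : M * P = P * M := by
  rw [← hP.2.2.2, transpose_mul, (hP.isSymm hM).eq, hM.eq]

theorem mul_mul_self : M * (M * P) = M := by
  rw [hP.mul_comm hM, ← mul_assoc, hP.1]

theorem self_mul_mul : P * P * M = P := by
  rw [mul_assoc, ← hP.mul_comm hM, ← mul_assoc, hP.2.1]

end IsMoorePenrose

theorem IsMoorePenrose.le_of_le_of_ker_le {d : ℕ} {A B PA PB : Matrix (Fin d) (Fin d) ℝ}
    (hA : A.PosSemidef) (hAB : A ≤ B) (hker : ∀ v, A *ᵥ v = 0 → B *ᵥ v = 0)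
    (hPA : IsMoorePenrose A PA) (hPB : IsMoorePenrose B PB) : PB ≤ PA := by
  have hAs : A.IsSymm := isHermitian_iff_isSymm.1 hA.isHermitian
  have hB : B.PosSemidef := by simpa using hA.add (le_iff.1 hAB)
  have hBs : B.IsSymm := isHermitian_iff_isSymm.1 hB.isHermitian
  have hPAs := hPA.isSymm hAs
  have hPBs := hPB.isSymm hBs
  have hBE : B * (A * PA) = B := mul_eq_self_of_ker_le hker (hPA.mul_mul_self hAs)
  have hPB_A_PA : PB * A * PA = PB :=
    calc PB * A * PA = (PB * PB * B) * A * PA := by rw [hPB.self_mul_mul hBs]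
      _ = PB * PB * (B * (A * PA)) := by simp only [mul_assoc]
      _ = PB := by rw [hBE, hPB.self_mul_mul hBs]
  have hPA_A_PB : PA * A * PB = PB := by
    simpa only [transpose_mul, hAs.eq, hPAs.eq, hPBs.eq, mul_assoc]
      using congrArg Matrix.transpose hPB_A_PA
  have hdecomp : PA - PB = (PA - PB)ᴴ * A * (PA - PB) + PBᴴ * (B - A) * PB := by
    simp only [conjTranspose_eq_transpose_of_trivial, transpose_sub, hPAs.eq, hPBs.eq, mul_sub,
      sub_mul]
    rw [hPB_A_PA, hPA_A_PB, hPA.2.1, hPB.2.1]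
    abel
  rw [le_iff, hdecomp]
  exact (hA.conjTranspose_mul_mul_same _).add ((le_iff.1 hAB).conjTranspose_mul_mul_same PB)

/-- If `(1/κ)·B₁ᵀB₁ ⪯ B₂ᵀB₂ ⪯ B₁ᵀB₁` then for every row vector `x`,
`x (B₁ᵀB₁)⁺ xᵀ ≤ x (B₂ᵀB₂)⁺ xᵀ ≤ κ · x (B₁ᵀB₁)⁺ xᵀ`. -/
theorem stretch_reference_switch (κ : ℝ) (hκ : 1 ≤ κ) (m₁ m₂ d : ℕ)
    (B₁ : Matrix (Fin m₁) (Fin d) ℝ) (B₂ : Matrix (Fin m₂) (Fin d) ℝ)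
    (hlow : (B₂ᵀ * B₂ - κ⁻¹ • (B₁ᵀ * B₁)).PosSemidef)
    (hupp : (B₁ᵀ * B₁ - B₂ᵀ * B₂).PosSemidef)
    (P₁ P₂ : Matrix (Fin d) (Fin d) ℝ)
    (hP₁ : IsMoorePenrose (B₁ᵀ * B₁) P₁)
    (hP₂ : IsMoorePenrose (B₂ᵀ * B₂) P₂) :
    ∀ x : Fin d → ℝ,
      x ⬝ᵥ P₁.mulVec x ≤ x ⬝ᵥ P₂.mulVec x ∧
      x ⬝ᵥ P₂.mulVec x ≤ κ * (x ⬝ᵥ P₁.mulVec x) := by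
  have hκ₀ : κ⁻¹ ≠ 0 := inv_ne_zero (by linarith)
  have hM₁ : (B₁ᵀ * B₁).PosSemidef := by
    simpa [conjTranspose_eq_transpose_of_trivial] using posSemidef_conjTranspose_mul_self B₁
  have hM₂ : (B₂ᵀ * B₂).PosSemidef := by
    simpa [conjTranspose_eq_transpose_of_trivial] using posSemidef_conjTranspose_mul_self B₂
  have hM₁' : (κ⁻¹ • (B₁ᵀ * B₁)).PosSemidef := hM₁.smul (by positivity)
  have hker₁ : ∀ v, (κ⁻¹ • (B₁ᵀ * B₁)) *ᵥ v = 0 ↔ (B₁ᵀ * B₁) *ᵥ v = 0 := fun v => by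
    rw [smul_mulVec, smul_eq_zero_iff_right hκ₀]
  have h₁₂ : P₁ ≤ P₂ := hP₂.le_of_le_of_ker_le hM₂ hupp
    (fun v hv => (hker₁ v).1 (mulVec_eq_zero_of_le hM₁' hlow hv)) hP₁
  have h₂₁ : P₂ ≤ κ • P₁ := by
    simpa using (hP₁.smul hκ₀).le_of_le_of_ker_le hM₁' hlow
      (fun v hv => mulVec_eq_zero_of_le hM₂ hupp ((hker₁ v).1 hv)) hP₂
  intro x
  have q₁₂ := (le_iff.1 h₁₂).dotProduct_mulVec_nonneg x
  have q₂₁ := (le_iff.1 h₂₁).dotProduct_mulVec_nonneg x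
  simp only [star_trivial, sub_mulVec, dotProduct_sub, smul_mulVec, dotProduct_smul,
    smul_eq_mul, sub_nonneg] at q₁₂ q₂₁
  exact ⟨q₁₂, q₂₁⟩
end

section
/- Let A be a real n × d matrix of rank r, let P be a Moore–Penrose pseudoinverse of AᵀA, and let C be a real d × r matrix of rank r such that (1/2)·P ⪯ C Cᵀ ⪯ (3/2)·P in the Loewner order. Let p ∈ [1, ∞) and let q be its dual exponent (1/p + 1/q = 1, with q = ∞ and ‖z‖_∞ = maxᵢ |zᵢ| when p = 1). Then U = A C satisfies: if 1 ≤ p ≤ 2, then |||U|||_p ≤ √2 · (nd)^{1/p − 1/2} · d^{1/2} and ‖z‖_q ≤ √2 · ‖U z‖_p for all z ∈ ℝʳ; and if p ≥ 2, then |||U|||_p ≤ √2 · d^{1/2} and ‖z‖_q ≤ √2 · (nd)^{1/2 − 1/p} · ‖U z‖_p for all z ∈ ℝʳ. -/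
open Matrix BigOperators

noncomputable def lpNorm {n : ℕ} (p : ℝ) (v : Fin n → ℝ) : ℝ := (∑ i, |v i| ^ p) ^ (1 / p)

/-- The dual-norm `‖·‖_q` where `1/p + 1/q = 1`; when `p = 1` this is the max-norm. -/
noncomputable def dualNorm {n : ℕ} (p : ℝ) (v : Fin n → ℝ) : ℝ :=
  if p = 1 then ⨆ i, |v i| else lpNorm (p / (p - 1)) v

noncomputable def entryNorm {n m : ℕ} (p : ℝ) (M : Matrix (Fin n) (Fin m) ℝ) : ℝ :=
  (∑ i, ∑ j, |M i j| ^ p) ^ (1 / p)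

/-!
Let `M = Aᵀ A` and let `S = Uᵀ U` be the Gram matrix of `U = A C`. Conjugating the two Loewner
bounds on `C Cᵀ` by `M C` and using `M P M = M` gives `S / 2 ⪯ S² ⪯ 3 S / 2`. The kernel of `M` is
isotropic for `P`, so the upper bound and the injectivity of `C` make `U` injective, that is, `S`
positive definite; the continuous functional calculus then turns the bounds into
`I / 2 ⪯ S ⪯ 3 I / 2`. Hence `‖z‖₂ ≤ √2 ‖U z‖₂` and `|||U|||₂² = tr S ≤ 3 r / 2 ≤ 2 d`, and the
claimed bounds follow by comparing the `ℓ_p`, `ℓ_q` and `ℓ_2` norms in dimensions `n r ≤ n d`, `n`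
and `r`.
-/

lemma Real.rpow_sum_le_sum_rpow {ι : Type*} {s : Finset ι} {f : ι → ℝ} {t : ℝ}
    (hf : ∀ i ∈ s, 0 ≤ f i) (ht₀ : 0 < t) (ht₁ : t ≤ 1) :
    (∑ i ∈ s, f i) ^ t ≤ ∑ i ∈ s, f i ^ t := by
  induction s using Finset.cons_induction with
  | empty => simp [Real.zero_rpow ht₀.ne']
  | cons a s ha ih =>
    rw [Finset.forall_mem_cons] at hf
    rw [Finset.sum_cons, Finset.sum_cons]
    calc (f a + ∑ i ∈ s, f i) ^ t ≤ f a ^ t + (∑ i ∈ s, f i) ^ t :=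
          Real.rpow_add_le_add_rpow hf.1 (Finset.sum_nonneg hf.2) ht₀.le ht₁
      _ ≤ f a ^ t + ∑ i ∈ s, f i ^ t := by gcongr; exact ih hf.2

section PNorm

variable {ι : Type*} [Fintype ι]

noncomputable def pNorm (p : ℝ) (v : ι → ℝ) : ℝ := (∑ i, |v i| ^ p) ^ (1 / p)

lemma pNorm_nonneg (p : ℝ) (v : ι → ℝ) : 0 ≤ pNorm p v := by unfold pNorm; positivity

lemma abs_rpow_eq_abs_rpow_rpow {a : ℝ} (b : ℝ) (ha : a ≠ 0) (x : ℝ) :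
    |x| ^ b = (|x| ^ a) ^ (b / a) := by
  rw [← Real.rpow_mul (abs_nonneg x), mul_div_cancel₀ b ha]

lemma pNorm_le_pNorm_of_le {a b : ℝ} (ha : 0 < a) (hab : a ≤ b) (v : ι → ℝ) :
    pNorm b v ≤ pNorm a v := by
  have hb : 0 < b := ha.trans_le hab
  have hsum : (∑ i, |v i| ^ b) ^ (a / b) ≤ ∑ i, |v i| ^ a := by
    simp_rw [abs_rpow_eq_abs_rpow_rpow a hb.ne' (v _)]
    exact Real.rpow_sum_le_sum_rpow (fun i _ => by positivity) (by positivity)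
      ((div_le_one hb).2 hab)
  calc pNorm b v = ((∑ i, |v i| ^ b) ^ (a / b)) ^ (1 / a) := by
        rw [pNorm, ← Real.rpow_mul (by positivity)]; field_simp
    _ ≤ pNorm a v := by unfold pNorm; gcongr

lemma pNorm_le_card_rpow_mul_pNorm {a b : ℝ} (ha : 0 < a) (hab : a ≤ b) (v : ι → ℝ) :
    pNorm a v ≤ (Fintype.card ι : ℝ) ^ (1 / a - 1 / b) * pNorm b v := by
  have hb : 0 < b := ha.trans_le hab
  have hsum : (∑ i, |v i| ^ a) ^ (b / a) ≤
      (Fintype.card ι : ℝ) ^ (b / a - 1) * ∑ i, |v i| ^ b := by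
    simpa only [Finset.card_univ, ← abs_rpow_eq_abs_rpow_rpow b ha.ne'] using
      Real.rpow_sum_le_const_mul_sum_rpow_of_nonneg (s := Finset.univ) (f := fun i => |v i| ^ a)
        ((one_le_div ha).2 hab) (fun i _ => by positivity)
  calc pNorm a v = ((∑ i, |v i| ^ a) ^ (b / a)) ^ (1 / b) := by
        rw [pNorm, ← Real.rpow_mul (by positivity)]; field_simp
    _ ≤ ((Fintype.card ι : ℝ) ^ (b / a - 1) * ∑ i, |v i| ^ b) ^ (1 / b) := by gcongr
    _ = (Fintype.card ι : ℝ) ^ (1 / a - 1 / b) * pNorm b v := by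
        rw [Real.mul_rpow (by positivity) (by positivity), ← Real.rpow_mul (by positivity), pNorm]
        congr 2
        field_simp

lemma abs_le_pNorm {p : ℝ} (hp : 0 < p) (v : ι → ℝ) (i : ι) : |v i| ≤ pNorm p v := by
  calc |v i| = (|v i| ^ p) ^ (1 / p) := by
        rw [← Real.rpow_mul (abs_nonneg _), mul_one_div_cancel hp.ne', Real.rpow_one]
    _ ≤ pNorm p v := by
        unfold pNorm
        gcongr
        exact Finset.single_le_sum (f := fun j => |v j| ^ p) (fun j _ => by positivity)
          (Finset.mem_univ i)

lemma pNorm_two_eq_sqrt (v : ι → ℝ) : pNorm 2 v = √(∑ i, v i ^ 2) := by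
  simp only [pNorm, Real.rpow_two, sq_abs, Real.sqrt_eq_rpow]

end PNorm

lemma lpNorm_eq_pNorm {n : ℕ} (p : ℝ) (v : Fin n → ℝ) : lpNorm p v = pNorm p v := rfl

lemma entryNorm_eq_pNorm {n m : ℕ} (p : ℝ) (M : Matrix (Fin n) (Fin m) ℝ) :
    entryNorm p M = pNorm p (fun ij : Fin n × Fin m => M ij.1 ij.2) := by
  rw [entryNorm, pNorm, Fintype.sum_prod_type]

lemma lpNorm_nonneg {n : ℕ} (p : ℝ) (v : Fin n → ℝ) : 0 ≤ lpNorm p v := pNorm_nonneg p v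

lemma entryNorm_nonneg {n m : ℕ} (p : ℝ) (M : Matrix (Fin n) (Fin m) ℝ) : 0 ≤ entryNorm p M := by
  rw [entryNorm_eq_pNorm]; exact pNorm_nonneg p _

lemma lpNorm_two_eq_sqrt_dotProduct {n : ℕ} (v : Fin n → ℝ) : lpNorm 2 v = √(v ⬝ᵥ v) := by
  simp only [lpNorm_eq_pNorm, pNorm_two_eq_sqrt, dotProduct, sq]

lemma entryNorm_two_eq_sqrt_trace {n m : ℕ} (U : Matrix (Fin n) (Fin m) ℝ) :
    entryNorm 2 U = √(Uᵀ * U).trace := by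
  rw [entryNorm_eq_pNorm, pNorm_two_eq_sqrt, Fintype.sum_prod_type, Finset.sum_comm]
  simp only [trace, diag, mul_apply, transpose_apply, sq]

lemma lpNorm_two_le_lpNorm {n : ℕ} {p : ℝ} (hp : 0 < p) (hp₂ : p ≤ 2) (v : Fin n → ℝ) :
    lpNorm 2 v ≤ lpNorm p v :=
  pNorm_le_pNorm_of_le hp hp₂ v

lemma lpNorm_two_le_card_rpow_mul_lpNorm {n : ℕ} {p : ℝ} (hp : 2 ≤ p) (v : Fin n → ℝ) :
    lpNorm 2 v ≤ (n : ℝ) ^ (1 / 2 - 1 / p) * lpNorm p v := by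
  have h := pNorm_le_card_rpow_mul_pNorm two_pos hp v
  rw [Fintype.card_fin] at h
  exact h

lemma entryNorm_le_entryNorm_two {n m : ℕ} {p : ℝ} (hp : 2 ≤ p) (M : Matrix (Fin n) (Fin m) ℝ) :
    entryNorm p M ≤ entryNorm 2 M := by
  simpa only [entryNorm_eq_pNorm] using
    pNorm_le_pNorm_of_le two_pos hp fun ij : Fin n × Fin m => M ij.1 ij.2

lemma entryNorm_le_rpow_mul_entryNorm_two {n m : ℕ} {p : ℝ} (hp : 0 < p) (hp₂ : p ≤ 2)
    (M : Matrix (Fin n) (Fin m) ℝ) :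
    entryNorm p M ≤ ((n : ℝ) * m) ^ (1 / p - 1 / 2) * entryNorm 2 M := by
  simpa only [entryNorm_eq_pNorm, Fintype.card_prod, Fintype.card_fin, Nat.cast_mul] using
    pNorm_le_card_rpow_mul_pNorm hp hp₂ fun ij : Fin n × Fin m => M ij.1 ij.2

lemma dualNorm_le_lpNorm_two {r : ℕ} {p : ℝ} (hp : 1 ≤ p) (hp₂ : p ≤ 2) (z : Fin r → ℝ) :
    dualNorm p z ≤ lpNorm 2 z := by
  unfold dualNorm
  split_ifs with hp₁
  · exact Real.iSup_le (abs_le_pNorm two_pos z) (pNorm_nonneg 2 z)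
  · have hq : 2 ≤ p / (p - 1) := by
      rw [le_div_iff₀ (by linarith [lt_of_le_of_ne hp (Ne.symm hp₁)])]; linarith
    exact pNorm_le_pNorm_of_le two_pos hq z

lemma dualNorm_le_card_rpow_mul_lpNorm_two {r : ℕ} {p : ℝ} (hp : 2 ≤ p) (z : Fin r → ℝ) :
    dualNorm p z ≤ (r : ℝ) ^ (1 / 2 - 1 / p) * lpNorm 2 z := by
  have hp₁ : 1 < p := by linarith
  have hq : 1 / (p / (p - 1)) - 1 / 2 = 1 / 2 - 1 / p := by field_simp; ring
  have h := pNorm_le_card_rpow_mul_pNorm (by positivity)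
    ((div_le_iff₀ (by linarith)).2 (by linarith) : p / (p - 1) ≤ 2) z
  rw [Fintype.card_fin, hq] at h
  rw [dualNorm, if_neg hp₁.ne']
  exact h

section
variable {A : Type*} [TopologicalSpace A] [Ring A] [StarRing A] [PartialOrder A]
  [StarOrderedRing A] [Algebra ℝ A] [ContinuousFunctionalCalculus ℝ A IsSelfAdjoint]
  [NonnegSpectrumClass ℝ A]

lemma algebraMap_le_of_smul_le_mul_self {a : A} (ha : IsStrictlyPositive a) {c : ℝ}
    (h : c • a ≤ a * a) : algebraMap ℝ A c ≤ a := by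
  have hspec := (cfc_le_iff (c * ·) (· ^ 2) a).1 <| by
    rwa [cfc_const_mul_id c a ha.isSelfAdjoint, cfc_pow_id a 2 ha.isSelfAdjoint, sq]
  refine algebraMap_le_of_le_spectrum fun x hx => ?_
  nlinarith [hspec x hx, ha.spectrum_pos hx]

lemma le_algebraMap_of_mul_self_le_smul {a : A} (ha : 0 ≤ a) {c : ℝ} (hc : 0 ≤ c)
    (h : a * a ≤ c • a) : a ≤ algebraMap ℝ A c := by
  have hspec := (cfc_le_iff (· ^ 2) (c * ·) a).1 <| by
    rwa [cfc_const_mul_id c a ha.isSelfAdjoint, cfc_pow_id a 2 ha.isSelfAdjoint, sq]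
  refine le_algebraMap_of_spectrum_le fun x hx => ?_
  nlinarith [hspec x hx, spectrum_nonneg_of_nonneg ha hx]

end

lemma Matrix.mulVec_injective_of_rank_eq_card {K m n : Type*} [Field K] [Fintype n]
    (C : Matrix m n K) (hC : C.rank = Fintype.card n) :
    Function.Injective C.mulVec := by
  have hker := LinearMap.finrank_range_add_finrank_ker C.mulVecLin
  rw [← Matrix.rank, hC, Module.finrank_fintype_fun_eq_card, add_eq_left,
    Submodule.finrank_eq_zero, LinearMap.ker_eq_bot] at hker
  exact hker

lemma IsMoorePenrose.dotProduct_mulVec_eq_zero {d : ℕ} {M P : Matrix (Fin d) (Fin d) ℝ}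
    (hP : IsMoorePenrose M P) {v : Fin d → ℝ} (hv : M *ᵥ v = 0) : v ⬝ᵥ (P *ᵥ v) = 0 := by
  obtain ⟨-, hPMP, -, hPM⟩ := hP
  have hPMv : (P * M)ᵀ *ᵥ v = 0 := by rw [hPM, ← mulVec_mulVec, hv, mulVec_zero]
  rw [← hPMP, ← mulVec_mulVec, dotProduct_mulVec, ← mulVec_transpose, hPMv, zero_dotProduct]

open scoped MatrixOrder

open scoped ComplexOrder in
lemma Matrix.conjTranspose_mul_mul_le_of_le {𝕜 m n : Type*} [RCLike 𝕜] [Fintype m] [Fintype n]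
    {X Y : Matrix n n 𝕜} (h : X ≤ Y) (B : Matrix n m 𝕜) : Bᴴ * X * B ≤ Bᴴ * Y * B := by
  rw [le_iff] at h ⊢
  simpa only [Matrix.mul_sub, Matrix.sub_mul] using h.conjTranspose_mul_mul_same B

section Norms

variable {n r : ℕ} {U : Matrix (Fin n) (Fin r) ℝ}

lemma lpNorm_two_le_sqrt_mul_of_inv_smul_one_le {c : ℝ} (hc : 0 < c)
    (h : c⁻¹ • 1 ≤ Uᵀ * U) (z : Fin r → ℝ) : lpNorm 2 z ≤ √c * lpNorm 2 (U *ᵥ z) := by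
  have hz := (le_iff.1 h).dotProduct_mulVec_nonneg z
  rw [star_trivial, sub_mulVec, smul_mulVec, one_mulVec, dotProduct_sub, dotProduct_smul,
    ← mulVec_mulVec, dotProduct_mulVec, vecMul_transpose, smul_eq_mul, sub_nonneg,
    inv_mul_le_iff₀ hc] at hz
  rw [lpNorm_two_eq_sqrt_dotProduct, lpNorm_two_eq_sqrt_dotProduct, ← Real.sqrt_mul hc.le]
  exact Real.sqrt_le_sqrt hz

lemma entryNorm_two_le_of_le_smul_one {c : ℝ} (h : Uᵀ * U ≤ c • 1) :
    entryNorm 2 U ≤ √(c * r) := by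
  have htr := (le_iff.1 h).trace_nonneg
  rw [trace_sub, trace_smul, trace_one, Fintype.card_fin, smul_eq_mul, sub_nonneg] at htr
  rw [entryNorm_two_eq_sqrt_trace]
  exact Real.sqrt_le_sqrt htr

end Norms

section Gram

variable {n d r : ℕ} {A : Matrix (Fin n) (Fin d) ℝ} {P : Matrix (Fin d) (Fin d) ℝ}
  {C : Matrix (Fin d) (Fin r) ℝ}

lemma transpose_mul_mul_pinv_eq (hP : Aᵀ * A * P * (Aᵀ * A) = Aᵀ * A) :
    (Aᵀ * A * C)ᵀ * P * (Aᵀ * A * C) = (A * C)ᵀ * (A * C) := by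
  calc (Aᵀ * A * C)ᵀ * P * (Aᵀ * A * C) = Cᵀ * (Aᵀ * A * P * (Aᵀ * A)) * C := by
        simp only [transpose_mul, transpose_transpose, Matrix.mul_assoc]
    _ = (A * C)ᵀ * (A * C) := by
        rw [hP]; simp only [transpose_mul, Matrix.mul_assoc]

lemma transpose_mul_mul_mul_transpose_eq :
    (Aᵀ * A * C)ᵀ * (C * Cᵀ) * (Aᵀ * A * C) = (A * C)ᵀ * (A * C) * ((A * C)ᵀ * (A * C)) := by
  simp only [transpose_mul, transpose_transpose, Matrix.mul_assoc]

lemma smul_gram_le_gram_mul_gram (hP : Aᵀ * A * P * (Aᵀ * A) = Aᵀ * A) {c : ℝ}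
    (h : c • P ≤ C * Cᵀ) :
    c • ((A * C)ᵀ * (A * C)) ≤ (A * C)ᵀ * (A * C) * ((A * C)ᵀ * (A * C)) := by
  have := conjTranspose_mul_mul_le_of_le h (Aᵀ * A * C)
  rwa [conjTranspose_eq_transpose_of_trivial, Matrix.mul_smul, Matrix.smul_mul,
    transpose_mul_mul_pinv_eq hP, transpose_mul_mul_mul_transpose_eq] at this

lemma gram_mul_gram_le_smul_gram (hP : Aᵀ * A * P * (Aᵀ * A) = Aᵀ * A) {c : ℝ}
    (h : C * Cᵀ ≤ c • P) :
    (A * C)ᵀ * (A * C) * ((A * C)ᵀ * (A * C)) ≤ c • ((A * C)ᵀ * (A * C)) := by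
  have := conjTranspose_mul_mul_le_of_le h (Aᵀ * A * C)
  rwa [conjTranspose_eq_transpose_of_trivial, Matrix.mul_smul, Matrix.smul_mul,
    transpose_mul_mul_pinv_eq hP, transpose_mul_mul_mul_transpose_eq] at this

lemma mulVec_mul_injective (hP : IsMoorePenrose (Aᵀ * A) P)
    (hC : Function.Injective C.mulVec) {c : ℝ} (h : C * Cᵀ ≤ c • P) :
    Function.Injective (A * C).mulVec := by
  refine (injective_iff_map_eq_zero (A * C).mulVecLin).2 fun x hx => hC ?_
  set v := C *ᵥ x
  have hAv : A *ᵥ v = 0 := by rw [mulVec_mulVec]; exact hx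
  have hPv : v ⬝ᵥ (P *ᵥ v) = 0 :=
    hP.dotProduct_mulVec_eq_zero (by rw [← mulVec_mulVec, hAv, mulVec_zero])
  have hCv : (Cᵀ *ᵥ v) ⬝ᵥ (Cᵀ *ᵥ v) ≤ 0 := by
    have := (le_iff.1 h).dotProduct_mulVec_nonneg v
    rw [star_trivial, sub_mulVec, smul_mulVec, dotProduct_sub, dotProduct_smul, hPv,
      ← mulVec_mulVec, dotProduct_mulVec, ← mulVec_transpose] at this
    simpa using this
  have hCv0 : Cᵀ *ᵥ v = 0 := dotProduct_self_eq_zero.1 <|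
    le_antisymm hCv (star_trivial (Cᵀ *ᵥ v) ▸ dotProduct_star_self_nonneg _)
  rw [mulVec_zero, ← dotProduct_self_eq_zero]
  calc v ⬝ᵥ v = (Cᵀ *ᵥ v) ⬝ᵥ x := by rw [mulVec_transpose, ← dotProduct_mulVec]
    _ = 0 := by rw [hCv0, zero_dotProduct]

lemma smul_one_le_gram (hP : IsMoorePenrose (Aᵀ * A) P) (hC : Function.Injective C.mulVec)
    {c c' : ℝ} (h₁ : c • P ≤ C * Cᵀ) (h₂ : C * Cᵀ ≤ c' • P) :
    c • (1 : Matrix (Fin r) (Fin r) ℝ) ≤ (A * C)ᵀ * (A * C) := by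
  rw [← Algebra.algebraMap_eq_smul_one]
  refine algebraMap_le_of_smul_le_mul_self ?_ (smul_gram_le_gram_mul_gram hP.1 h₁)
  rw [isStrictlyPositive_iff_posDef, ← conjTranspose_eq_transpose_of_trivial]
  exact PosDef.conjTranspose_mul_self _ (mulVec_mul_injective hP hC h₂)

lemma gram_le_smul_one (hP : Aᵀ * A * P * (Aᵀ * A) = Aᵀ * A) {c : ℝ} (hc : 0 ≤ c)
    (h : C * Cᵀ ≤ c • P) : (A * C)ᵀ * (A * C) ≤ c • (1 : Matrix (Fin r) (Fin r) ℝ) := by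
  rw [← Algebra.algebraMap_eq_smul_one]
  refine le_algebraMap_of_mul_self_le_smul ?_ hc (gram_mul_gram_le_smul_gram hP h)
  rw [← conjTranspose_eq_transpose_of_trivial]
  exact (posSemidef_conjTranspose_mul_self _).nonneg

lemma entryNorm_two_mul_le (hP : Aᵀ * A * P * (Aᵀ * A) = Aᵀ * A) (hrd : r ≤ d)
    (h : C * Cᵀ ≤ (3 / 2 : ℝ) • P) : entryNorm 2 (A * C) ≤ √2 * (d : ℝ) ^ ((1 : ℝ) / 2) := by
  have hrd' : (r : ℝ) ≤ d := by exact_mod_cast hrd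
  calc entryNorm 2 (A * C) ≤ √(3 / 2 * r) :=
        entryNorm_two_le_of_le_smul_one (gram_le_smul_one hP (by norm_num) h)
    _ ≤ √(2 * d) := Real.sqrt_le_sqrt (by linarith [(Nat.cast_nonneg r : (0 : ℝ) ≤ r)])
    _ = √2 * (d : ℝ) ^ ((1 : ℝ) / 2) := by
        rw [Real.sqrt_mul zero_le_two, Real.sqrt_eq_rpow (d : ℝ)]

lemma lpNorm_two_le_sqrt_two_mul (hP : IsMoorePenrose (Aᵀ * A) P) (hC : C.rank = r) {c : ℝ}
    (h₁ : (1 / 2 : ℝ) • P ≤ C * Cᵀ) (h₂ : C * Cᵀ ≤ c • P) (z : Fin r → ℝ) :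
    lpNorm 2 z ≤ √2 * lpNorm 2 ((A * C) *ᵥ z) := by
  refine lpNorm_two_le_sqrt_mul_of_inv_smul_one_le two_pos ?_ z
  rw [inv_eq_one_div]
  exact smul_one_le_gram hP (C.mulVec_injective_of_rank_eq_card (by simpa using hC)) h₁ h₂

end Gram

theorem well_conditioned_basis_general (n d r : ℕ) (A : Matrix (Fin n) (Fin d) ℝ)
    (P : Matrix (Fin d) (Fin d) ℝ) (hP : IsMoorePenrose (Aᵀ * A) P)
    (C : Matrix (Fin d) (Fin r) ℝ) (hC : C.rank = r)
    (h₁ : (C * Cᵀ - (1 / 2 : ℝ) • P).PosSemidef)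
    (h₂ : ((3 / 2 : ℝ) • P - C * Cᵀ).PosSemidef)
    (p : ℝ) (hp : 1 ≤ p) :
    (p ≤ 2 →
      entryNorm p (A * C) ≤
        Real.sqrt 2 * ((n : ℝ) * d) ^ (1 / p - 1 / 2) * (d : ℝ) ^ ((1 : ℝ) / 2) ∧
      ∀ z : Fin r → ℝ, dualNorm p z ≤ Real.sqrt 2 * lpNorm p ((A * C).mulVec z)) ∧
    (2 ≤ p →
      entryNorm p (A * C) ≤ Real.sqrt 2 * (d : ℝ) ^ ((1 : ℝ) / 2) ∧
      ∀ z : Fin r → ℝ,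
        dualNorm p z ≤
          Real.sqrt 2 * ((n : ℝ) * d) ^ (1 / 2 - 1 / p) * lpNorm p ((A * C).mulVec z)) := by
  set U := A * C
  have hp₀ : 0 < p := by linarith
  have hrd : r ≤ d := hC ▸ C.rank_le_height
  have hU := entryNorm_two_mul_le hP.1 hrd (le_iff.2 h₂)
  have hz := lpNorm_two_le_sqrt_two_mul hP hC (le_iff.2 h₁) (le_iff.2 h₂)
  refine ⟨fun hp₂ => ⟨?_, fun z => ?_⟩, fun hp₂ => ⟨?_, fun z => ?_⟩⟩
  · have he : 0 ≤ 1 / p - 1 / 2 := sub_nonneg.2 (one_div_le_one_div_of_le hp₀ hp₂)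
    calc entryNorm p U ≤ ((n : ℝ) * r) ^ (1 / p - 1 / 2) * entryNorm 2 U :=
          entryNorm_le_rpow_mul_entryNorm_two hp₀ hp₂ U
      _ ≤ ((n : ℝ) * d) ^ (1 / p - 1 / 2) * (√2 * (d : ℝ) ^ ((1 : ℝ) / 2)) := by
          gcongr; exact entryNorm_nonneg 2 U
      _ = _ := by ring
  · calc dualNorm p z ≤ lpNorm 2 z := dualNorm_le_lpNorm_two hp hp₂ z
      _ ≤ √2 * lpNorm 2 (U *ᵥ z) := hz z
      _ ≤ √2 * lpNorm p (U *ᵥ z) := by gcongr; exact lpNorm_two_le_lpNorm hp₀ hp₂ _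
  · exact (entryNorm_le_entryNorm_two hp₂ U).trans hU
  · have he : 0 ≤ 1 / 2 - 1 / p := sub_nonneg.2 (one_div_le_one_div_of_le two_pos hp₂)
    calc dualNorm p z ≤ (r : ℝ) ^ (1 / 2 - 1 / p) * lpNorm 2 z :=
          dualNorm_le_card_rpow_mul_lpNorm_two hp₂ z
      _ ≤ (r : ℝ) ^ (1 / 2 - 1 / p) * (√2 * ((n : ℝ) ^ (1 / 2 - 1 / p) * lpNorm p (U *ᵥ z))) := by
          gcongr
          exact (hz z).trans (by gcongr; exact lpNorm_two_le_card_rpow_mul_lpNorm hp₂ _)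
      _ = √2 * ((n : ℝ) * r) ^ (1 / 2 - 1 / p) * lpNorm p (U *ᵥ z) := by
          rw [Real.mul_rpow (by positivity) (by positivity)]; ring
      _ ≤ √2 * ((n : ℝ) * d) ^ (1 / 2 - 1 / p) * lpNorm p (U *ᵥ z) := by
          gcongr; exact lpNorm_nonneg ..

/-- If `(1/2)(AᵀA)⁺ ⪯ CCᵀ ⪯ (3/2)(AᵀA)⁺`, then `U = AC` is a well-conditioned basis:
for `1 ≤ p ≤ 2`, `|||U|||_p ≤ √2 (nd)^(1/p−1/2) d^(1/2)` and `‖z‖_q ≤ √2 ‖Uz‖_p`;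
for `p ≥ 2`, `|||U|||_p ≤ √2 d^(1/2)` and `‖z‖_q ≤ √2 (nd)^(1/2−1/p) ‖Uz‖_p`. -/
theorem well_conditioned_basis (n d r : ℕ) (A : Matrix (Fin n) (Fin d) ℝ)
    (hrank : A.rank = r)
    (P : Matrix (Fin d) (Fin d) ℝ) (hP : IsMoorePenrose (Aᵀ * A) P)
    (C : Matrix (Fin d) (Fin r) ℝ) (hC : C.rank = r)
    (h₁ : (C * Cᵀ - (1 / 2 : ℝ) • P).PosSemidef)
    (h₂ : ((3 / 2 : ℝ) • P - C * Cᵀ).PosSemidef)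
    (p : ℝ) (hp : 1 ≤ p) :
    (p ≤ 2 →
      entryNorm p (A * C) ≤
        Real.sqrt 2 * ((n : ℝ) * d) ^ (1 / p - 1 / 2) * (d : ℝ) ^ ((1 : ℝ) / 2) ∧
      ∀ z : Fin r → ℝ, dualNorm p z ≤ Real.sqrt 2 * lpNorm p ((A * C).mulVec z)) ∧
    (2 ≤ p →
      entryNorm p (A * C) ≤ Real.sqrt 2 * (d : ℝ) ^ ((1 : ℝ) / 2) ∧
      ∀ z : Fin r → ℝ,
        dualNorm p z ≤
          Real.sqrt 2 * ((n : ℝ) * d) ^ (1 / 2 - 1 / p) * lpNorm p ((A * C).mulVec z)) :=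
  well_conditioned_basis_general n d r A P hP C hC h₁ h₂ p hp
end

section
/- Let k, R, d be positive integers with R ≥ e², and let μ be the probability measure on real k × R matrices under which all entries are independent standard Gaussians (mean 0, variance 1). Then for every fixed real R × d matrix M, μ({U : ‖U M‖_F² < (k/R)·‖M‖_F²}) ≤ d · R^{−k/4}, where ‖·‖_F denotes the Frobenius norm. -/
/-!
If `‖UM‖_F² < (k/R)‖M‖_F²`, then some column `m` of `M` has `‖Um‖² < (k/R)‖m‖²`, so a union
bound over the `d` columns reduces the claim to a single column. The entries of `Um` are
independent `N(0, ‖m‖²)`, and `E exp(-tY²) = (1 + 2t‖m‖²)^(-1/2)` for `Y ~ N(0, ‖m‖²)`, so the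
Chernoff bound at `t = (R - 1)/(2‖m‖²)` gives probability at most `e^(k/2) R^(-k/2)`, which is at
most `R^(-k/4)` as soon as `log R ≥ 2`.
-/

open Matrix BigOperators MeasureTheory ProbabilityTheory Real
open scoped NNReal

/-- The squared Frobenius norm of a matrix. -/
noncomputable def frobSq {a b : ℕ} (M : Matrix (Fin a) (Fin b) ℝ) : ℝ :=
  ∑ i, ∑ j, (M i j) ^ 2

theorem map_pi_gaussianReal_dotProduct {κ : Type*} [Fintype κ] (v : κ → ℝ) :
    (Measure.pi fun _ : κ => gaussianReal 0 1).map (· ⬝ᵥ v)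
      = gaussianReal 0 (∑ r, v r ^ 2).toNNReal := by
  set L : StrongDual ℝ (EuclideanSpace ℝ κ) := innerSL ℝ (WithLp.toLp 2 v)
  have hL : (· ⬝ᵥ v) = L ∘ WithLp.toLp 2 := by
    ext u; simp [L, PiLp.inner_apply, dotProduct, mul_comm]
  rw [hL, ← Measure.map_map L.continuous.measurable (by fun_prop), map_pi_eq_stdGaussian,
    IsGaussian.map_eq_gaussianReal, integral_strongDual_stdGaussian, variance_dual_stdGaussian,
    innerSL_apply_norm, EuclideanSpace.real_norm_sq_eq]

theorem integral_exp_neg_mul_sq_gaussianReal {v : ℝ≥0} (hv : v ≠ 0) {t : ℝ} (ht : 0 ≤ t) :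
    ∫ x, exp (-t * x ^ 2) ∂gaussianReal 0 v = (√(1 + 2 * t * v))⁻¹ := by
  have hv' : (0 : ℝ) < v := by positivity
  have hpdf : ∀ x, gaussianPDFReal 0 v x • exp (-t * x ^ 2)
      = (√(2 * π * v))⁻¹ * exp (-((2 * (v : ℝ))⁻¹ + t) * x ^ 2) := by
    intro x
    rw [gaussianPDFReal, smul_eq_mul, mul_assoc, ← exp_add]
    congr 2
    ring
  simp_rw [integral_gaussianReal_eq_integral_smul hv, hpdf]
  rw [integral_const_mul, integral_gaussian, ← sqrt_inv, ← sqrt_mul (by positivity), ← sqrt_inv]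
  congr 1
  field_simp

theorem pi_gaussianReal_sum_sq_le_le {ι : Type*} [Fintype ι] {v : ℝ≥0} (hv : v ≠ 0) {t : ℝ}
    (ht : 0 ≤ t) (a : ℝ) :
    (Measure.pi fun _ : ι => gaussianReal 0 v) {y | ∑ i, y i ^ 2 ≤ a}
      ≤ ENNReal.ofReal (exp (t * a) * (√(1 + 2 * t * v))⁻¹ ^ Fintype.card ι) := by
  set μ := Measure.pi fun _ : ι => gaussianReal 0 v
  have hint : Integrable (fun y : ι → ℝ => exp (-t * ∑ i, y i ^ 2)) μ := by
    refine .of_bound (Continuous.aestronglyMeasurable (by fun_prop)) 1 (.of_forall fun y => ?_)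
    rw [norm_of_nonneg (exp_nonneg _), exp_le_one_iff]
    exact mul_nonpos_of_nonpos_of_nonneg (neg_nonpos.2 ht) (by positivity)
  have hmgf : mgf (fun y : ι → ℝ => ∑ i, y i ^ 2) μ (-t)
      = (√(1 + 2 * t * v))⁻¹ ^ Fintype.card ι := by
    simp_rw [mgf, Finset.mul_sum, exp_sum, mul_comm (-t)]
    rw [integral_fintype_prod_eq_prod (fun _ y => exp (y ^ 2 * -t))]
    simp_rw [mul_comm _ (-t), integral_exp_neg_mul_sq_gaussianReal hv ht, Finset.prod_const,
      Finset.card_univ]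
  rw [← ofReal_measureReal]
  refine ENNReal.ofReal_le_ofReal ?_
  simpa [hmgf] using measure_le_le_exp_mul_mgf a (neg_nonpos.2 ht) hint

theorem exp_half_mul_inv_sqrt_pow_le_rpow {x : ℝ} (hx : exp 2 ≤ x) (k : ℕ) :
    exp (k / 2) * (√x)⁻¹ ^ k ≤ x ^ (-(k : ℝ) / 4) := by
  have hx0 : 0 < x := (exp_pos 2).trans_le hx
  have hexp : exp (k / 2) ≤ x ^ ((k : ℝ) / 4) :=
    calc exp (k / 2) = exp 2 ^ ((k : ℝ) / 4) := by rw [← exp_mul]; ring_nf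
      _ ≤ x ^ ((k : ℝ) / 4) := by gcongr
  have hsqrt : (√x)⁻¹ ^ k = x ^ (-(k : ℝ) / 2) := by
    rw [sqrt_eq_rpow, ← rpow_neg hx0.le, ← rpow_natCast, ← rpow_mul hx0.le]
    ring_nf
  calc exp (k / 2) * (√x)⁻¹ ^ k ≤ x ^ ((k : ℝ) / 4) * x ^ (-(k : ℝ) / 2) := by
        rw [hsqrt]; gcongr
    _ = x ^ (-(k : ℝ) / 4) := by rw [← rpow_add hx0]; ring_nf

theorem pi_pi_gaussianReal_sum_sq_dotProduct_lt_le {ι κ : Type*} [Fintype ι] [Fintype κ]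
    (hκ : exp 2 ≤ Fintype.card κ) (v : κ → ℝ) :
    (Measure.pi fun _ : ι => Measure.pi fun _ : κ => gaussianReal 0 1)
        {U | ∑ i, (U i ⬝ᵥ v) ^ 2 < ((Fintype.card ι : ℝ) / Fintype.card κ) * ∑ r, v r ^ 2}
      ≤ ENNReal.ofReal ((Fintype.card κ : ℝ) ^ (-(Fintype.card ι : ℝ) / 4)) := by
  set k : ℝ := (Fintype.card ι : ℝ)
  set R : ℝ := (Fintype.card κ : ℝ)
  set s := ∑ r, v r ^ 2
  have hR : 0 < R := (exp_pos 2).trans_le hκ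
  rcases (show 0 ≤ s by positivity).eq_or_lt with hs | hs
  · have hempty : ∀ U : ι → κ → ℝ, ¬ ∑ i, (U i ⬝ᵥ v) ^ 2 < k / R * s := fun U => by
      rw [← hs, mul_zero]; exact not_lt.2 (by positivity)
    simp [hempty]
  have hs' : s.toNNReal ≠ 0 := by simpa using hs
  -- `t = (R - 1) / (2s)` is the Chernoff parameter for which `1 + 2ts = R`.
  have ht : 0 ≤ (R - 1) / (2 * s) := by
    have : 1 ≤ R := le_trans (by linarith [add_one_le_exp 2]) hκ
    positivity
  calc _ = (Measure.pi fun _ : ι => gaussianReal 0 s.toNNReal) {y | ∑ i, y i ^ 2 < k / R * s} := by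
        rw [← map_pi_gaussianReal_dotProduct, ← Measure.pi_map_pi (fun _ => by fun_prop),
          Measure.map_apply (by fun_prop) (measurableSet_lt (by fun_prop) (by fun_prop))]
        rfl
    _ ≤ (Measure.pi fun _ : ι => gaussianReal 0 s.toNNReal) {y | ∑ i, y i ^ 2 ≤ k / R * s} :=
        measure_mono (Set.ofPred_subset_ofPred.2 fun _ => le_of_lt)
    _ ≤ ENNReal.ofReal (exp ((R - 1) / (2 * s) * (k / R * s))
          * (√(1 + 2 * ((R - 1) / (2 * s)) * s.toNNReal))⁻¹ ^ Fintype.card ι) :=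
        pi_gaussianReal_sum_sq_le_le hs' ht _
    _ ≤ ENNReal.ofReal (R ^ (-k / 4)) := by
        refine ENNReal.ofReal_le_ofReal (le_trans ?_ (exp_half_mul_inv_sqrt_pow_le_rpow hκ _))
        rw [Real.coe_toNNReal _ hs.le]
        have hvar : 1 + 2 * ((R - 1) / (2 * s)) * s = R := by field_simp; ring
        have hexponent : (R - 1) / (2 * s) * (k / R * s) ≤ k / 2 := by
          rw [show (R - 1) / (2 * s) * (k / R * s) = k / 2 * (1 - R⁻¹) by field_simp]
          exact mul_le_of_le_one_right (by positivity) (by simp [hR.le])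
        rw [hvar]
        gcongr

theorem frobSq_eq_sum_sum_sq_col {a b : ℕ} (M : Matrix (Fin a) (Fin b) ℝ) :
    frobSq M = ∑ j, ∑ i, M i j ^ 2 :=
  Finset.sum_comm

theorem gaussian_frobenius_lower_tail_general (k R d : ℕ)
    (hRe : Real.exp 2 ≤ (R : ℝ))
    (M : Matrix (Fin R) (Fin d) ℝ) :
    (Measure.pi fun _ : Fin k => Measure.pi fun _ : Fin R => gaussianReal 0 1)
        {U : Fin k → Fin R → ℝ |
          frobSq (Matrix.of U * M) < ((k : ℝ) / R) * frobSq M}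
      ≤ ENNReal.ofReal ((d : ℝ) * (R : ℝ) ^ (-(k : ℝ) / 4)) := by
  set μ := Measure.pi fun _ : Fin k => Measure.pi fun _ : Fin R => gaussianReal 0 1
  set column_event := fun j : Fin d =>
    {U : Fin k → Fin R → ℝ | ∑ i, (U i ⬝ᵥ fun r => M r j) ^ 2 < (k / R : ℝ) * ∑ r, M r j ^ 2}
  have hsub : {U : Fin k → Fin R → ℝ | frobSq (of U * M) < (k / R : ℝ) * frobSq M}
      ⊆ ⋃ j, column_event j := by
    intro U hU
    rw [Set.mem_ofPred_eq, frobSq_eq_sum_sum_sq_col, frobSq_eq_sum_sum_sq_col,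
      Finset.mul_sum] at hU
    obtain ⟨j, -, hj⟩ := Finset.exists_lt_of_sum_lt hU
    exact Set.mem_iUnion.2 ⟨j, hj⟩
  calc μ _ ≤ μ (⋃ j, column_event j) := measure_mono hsub
    _ ≤ ∑ j, μ (column_event j) := measure_iUnion_fintype_le _ _
    _ ≤ ∑ _j : Fin d, ENNReal.ofReal ((R : ℝ) ^ (-(k : ℝ) / 4)) := Finset.sum_le_sum fun j _ => by
        simpa using pi_pi_gaussianReal_sum_sq_dotProduct_lt_le (ι := Fin k) (by simpa using hRe)
          fun r => M r j
    _ = _ := by simp [ENNReal.ofReal_mul]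

/-- For i.i.d. standard Gaussian `k × R` matrices `U` with `R ≥ e²`, the probability that
`‖UM‖_F² < (k/R)‖M‖_F²` is at most `d · R^(−k/4)`. -/
theorem gaussian_frobenius_lower_tail (k R d : ℕ) (hk : 0 < k) (hR : 0 < R) (hd : 0 < d)
    (hRe : Real.exp 2 ≤ (R : ℝ))
    (M : Matrix (Fin R) (Fin d) ℝ) :
    (Measure.pi fun _ : Fin k => Measure.pi fun _ : Fin R => gaussianReal 0 1)
        {U : Fin k → Fin R → ℝ |
          frobSq (Matrix.of U * M) < ((k : ℝ) / R) * frobSq M}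
      ≤ ENNReal.ofReal ((d : ℝ) * (R : ℝ) ^ (-(k : ℝ) / 4)) :=
  gaussian_frobenius_lower_tail_general k R d hRe M
end
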